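/- If every non-trivial connected component C of a simple graph G is friendly-edge-colorable with χ'(C) = χ'(G), then G is friendly-edge-colorable. -/

import Mathlib

open scoped Classical

/-- `M` is a matching of `G`, given as a finite set of edges. -/
def IsMatchingFinset {V : Type*} (G : SimpleGraph V) (M : Finset (Sym2 V)) : Prop :=
  (M : Set (Sym2 V)) ⊆ G.edgeSet ∧
    ∀ e ∈ M, ∀ f ∈ M, e ≠ f → ∀ v : V, ¬(v ∈ e ∧ v ∈ f)

/-- ν(G): the maximum size of a matching of `G`. -/
noncomputable def matchingNumber {V : Type*} (G : SimpleGraph V) : ℕ :=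
  sSup {n | ∃ M : Finset (Sym2 V), IsMatchingFinset G M ∧ M.card = n}

/-- A proper edge coloring of `G` using colors `< n`. -/
def IsProperEdgeColoring {V : Type*} (G : SimpleGraph V) (n : ℕ) (c : Sym2 V → ℕ) : Prop :=
  (∀ e ∈ G.edgeSet, c e < n) ∧
    ∀ e ∈ G.edgeSet, ∀ f ∈ G.edgeSet, e ≠ f → (∃ v : V, v ∈ e ∧ v ∈ f) → c e ≠ c f

/-- χ'(G): the edge chromatic index of `G`. -/
noncomputable def chromaticIndex {V : Type*} (G : SimpleGraph V) : ℕ :=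
  sInf {n | ∃ c : Sym2 V → ℕ, IsProperEdgeColoring G n c}

/-- `G` is friendly-edge-colorable: its edge set is partitioned into maximum matchings. -/
noncomputable def Friendly {V : Type*} [Fintype V] (G : SimpleGraph V) : Prop :=
  ∃ P : Finset (Finset (Sym2 V)),
    (∀ M ∈ P, IsMatchingFinset G M ∧ M.card = matchingNumber G) ∧
    (∀ e, e ∈ G.edgeFinset ↔ ∃ M ∈ P, e ∈ M) ∧
    ∀ M ∈ P, ∀ N ∈ P, M ≠ N → Disjoint M N

/-- The graph `G` with vertex `x` deleted. -/
def delVert {V : Type*} (G : SimpleGraph V) (x : V) : SimpleGraph {v : V // v ≠ x} :=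
  G.induce {v : V | v ≠ x}

/-- `G` has a perfect matching. -/
def HasPerfectMatchingFinset {V : Type*} (G : SimpleGraph V) : Prop :=
  ∃ M : Finset (Sym2 V), IsMatchingFinset G M ∧ ∀ v : V, ∃ e ∈ M, v ∈ e

/-- `G` is factor-critical. -/
def FactorCritical {V : Type*} (G : SimpleGraph V) : Prop :=
  G.Connected ∧ ∀ x : V, HasPerfectMatchingFinset (delVert G x)


/-!
A friendly partition of a nontrivial component `C` consists of `#E(C) / ν(C)` maximum matchings,
and since a proper `χ'(C)`-edge-colouring has at most `ν(C)` edges per colour, this number is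
exactly `χ'(C)`. So every nontrivial component is partitioned into `χ'(G)` maximum matchings.
Merging the `i`-th matchings of all components gives a matching of `G` of size
`∑ ν(C) = ν(G)`, and these `χ'(G)` merged matchings partition `E(G)`.
-/

section

open Finset SimpleGraph Function

variable {V : Type*}

section Matchings

variable (G : SimpleGraph V)

theorem IsMatchingFinset.empty : IsMatchingFinset G ∅ := ⟨by simp, by simp⟩

theorem matchingNumber_bot : matchingNumber (⊥ : SimpleGraph V) = 0 := by
  refine Nat.eq_zero_of_le_zero (csSup_le ⟨0, ∅, .empty _, rfl⟩ ?_)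
  rintro _ ⟨M, hM, rfl⟩
  rw [nonpos_iff_eq_zero, card_eq_zero, ← coe_eq_empty, ← Set.subset_empty_iff, ← edgeSet_bot]
  exact hM.1

variable [Fintype V]

theorem bddAbove_matchingCards :
    BddAbove {n | ∃ M : Finset (Sym2 V), IsMatchingFinset G M ∧ #M = n} :=
  ⟨Fintype.card (Sym2 V), by rintro _ ⟨M, -, rfl⟩; exact card_le_univ M⟩

theorem exists_isMatchingFinset_card_eq_matchingNumber :
    ∃ M, IsMatchingFinset G M ∧ #M = matchingNumber G :=
  Nat.sSup_mem (s := {n | ∃ M, IsMatchingFinset G M ∧ #M = n}) ⟨0, ∅, .empty G, rfl⟩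
    (bddAbove_matchingCards G)

variable {G}

theorem IsMatchingFinset.card_le_matchingNumber {M : Finset (Sym2 V)}
    (hM : IsMatchingFinset G M) : #M ≤ matchingNumber G :=
  le_csSup (bddAbove_matchingCards G) ⟨M, hM, rfl⟩

theorem matchingNumber_pos {e : Sym2 V} (he : e ∈ G.edgeSet) : 0 < matchingNumber G := by
  have hM : IsMatchingFinset G {e} :=
    ⟨by simpa using he, fun a ha b hb hab => by simp_all⟩
  have hcard := hM.card_le_matchingNumber
  rwa [card_singleton] at hcard

end Matchings

section EdgeColorings

variable {G : SimpleGraph V} {n : ℕ} {c : Sym2 V → ℕ}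

theorem exists_isProperEdgeColoring_chromaticIndex [Fintype V] (G : SimpleGraph V) :
    ∃ c, IsProperEdgeColoring G (chromaticIndex G) c := by
  let idx := Fintype.equivFin (Sym2 V)
  refine Nat.sInf_mem (s := {n | ∃ c, IsProperEdgeColoring G n c})
    ⟨Fintype.card (Sym2 V), fun e => idx e, fun e _ => (idx e).2, ?_⟩
  exact fun e _ f _ hef _ h => hef (idx.injective (Fin.ext h))

theorem IsProperEdgeColoring.chromaticIndex_le (hc : IsProperEdgeColoring G n c) :
    chromaticIndex G ≤ n :=
  Nat.sInf_le ⟨c, hc⟩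

theorem IsProperEdgeColoring.isMatchingFinset_colorClass [Fintype G.edgeSet]
    (hc : IsProperEdgeColoring G n c) (i : ℕ) :
    IsMatchingFinset G {e ∈ G.edgeFinset | c e = i} := by
  refine ⟨fun e he => mem_edgeFinset.1 (mem_filter.1 he).1, fun e he f hf hef v hv => ?_⟩
  rw [mem_filter, mem_edgeFinset] at he hf
  exact hc.2 e he.1 f hf.1 hef ⟨v, hv⟩ (he.2.trans hf.2.symm)

theorem IsProperEdgeColoring.card_edgeFinset_le [Fintype V] (hc : IsProperEdgeColoring G n c) :
    #G.edgeFinset ≤ n * matchingNumber G := by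
  calc #G.edgeFinset ≤ #((range n).biUnion fun i => {e ∈ G.edgeFinset | c e = i}) := by
        refine card_le_card fun e he => mem_biUnion.2 ⟨c e, ?_, mem_filter.2 ⟨he, rfl⟩⟩
        exact mem_range.2 (hc.1 e (mem_edgeFinset.1 he))
    _ ≤ ∑ i ∈ range n, #{e ∈ G.edgeFinset | c e = i} := card_biUnion_le
    _ ≤ ∑ _i ∈ range n, matchingNumber G :=
        sum_le_sum fun i _ => (hc.isMatchingFinset_colorClass i).card_le_matchingNumber
    _ = n * matchingNumber G := by simp

end EdgeColorings

section Partitions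

variable {ι κ : Type*} {G : SimpleGraph V} {Q : ι → Finset (Sym2 V)}

/-- A friendly partition with an index type: indexing by `Fin (chromaticIndex G)` is what lets
the partitions of different components be merged colour by colour. -/
structure IsFriendlyPartition (G : SimpleGraph V) (Q : ι → Finset (Sym2 V)) : Prop where
  isMatchingFinset : ∀ i, IsMatchingFinset G (Q i)
  card_eq : ∀ i, #(Q i) = matchingNumber G
  mem_edgeSet_iff : ∀ e, e ∈ G.edgeSet ↔ ∃ i, e ∈ Q i
  pairwiseDisjoint : Pairwise (Disjoint on Q)

theorem chromaticIndex_le_card_of_isMatchingFinset [Fintype ι]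
    (hQ : ∀ i, IsMatchingFinset G (Q i)) (hcover : ∀ e ∈ G.edgeSet, ∃ i, e ∈ Q i) :
    chromaticIndex G ≤ Fintype.card ι := by
  choose idx hidx using hcover
  let color : Sym2 V → ℕ := fun e =>
    if he : e ∈ G.edgeSet then Fintype.equivFin ι (idx e he) else 0
  refine IsProperEdgeColoring.chromaticIndex_le (c := color) ⟨fun e he => ?_, ?_⟩
  · simp only [color, dif_pos he, Fin.is_lt]
  · intro e he f hf hef ⟨v, hve, hvf⟩ hcolor
    simp only [color, dif_pos he, dif_pos hf] at hcolor
    have hsame : idx e he = idx f hf := (Fintype.equivFin ι).injective (Fin.ext hcolor)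
    exact (hQ _).2 e (hidx e he) f (hsame ▸ hidx f hf) hef v ⟨hve, hvf⟩

theorem IsFriendlyPartition.card_edgeFinset [Fintype G.edgeSet] [Fintype ι]
    (hQ : IsFriendlyPartition G Q) : #G.edgeFinset = Fintype.card ι * matchingNumber G := by
  have hE : G.edgeFinset = univ.biUnion Q := by
    ext e
    simp [hQ.mem_edgeSet_iff]
  rw [hE, card_biUnion fun i _ j _ hij => hQ.pairwiseDisjoint hij]
  simp [hQ.card_eq]

theorem IsFriendlyPartition.card_eq_chromaticIndex [Fintype V] [Fintype ι]
    (hQ : IsFriendlyPartition G Q) (hG : G ≠ ⊥) : Fintype.card ι = chromaticIndex G := by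
  obtain ⟨e, he⟩ := edgeSet_nonempty.2 hG
  obtain ⟨c, hc⟩ := exists_isProperEdgeColoring_chromaticIndex G
  refine le_antisymm ?_ <| chromaticIndex_le_card_of_isMatchingFinset hQ.isMatchingFinset
    fun e he => (hQ.mem_edgeSet_iff e).1 he
  have hcard := hc.card_edgeFinset_le
  rw [hQ.card_edgeFinset] at hcard
  exact Nat.le_of_mul_le_mul_right hcard (matchingNumber_pos he)

theorem IsFriendlyPartition.comp_equiv (hQ : IsFriendlyPartition G Q) (σ : κ ≃ ι) :
    IsFriendlyPartition G (Q ∘ σ) where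
  isMatchingFinset k := hQ.isMatchingFinset (σ k)
  card_eq k := hQ.card_eq (σ k)
  mem_edgeSet_iff e := (hQ.mem_edgeSet_iff e).trans σ.surjective.exists
  pairwiseDisjoint := hQ.pairwiseDisjoint.comp_of_injective σ.injective

theorem IsFriendlyPartition.friendly [Fintype V] [Fintype ι] (hQ : IsFriendlyPartition G Q) :
    Friendly G := by
  refine ⟨univ.image Q, ?_, fun e => by simp [hQ.mem_edgeSet_iff], ?_⟩
  · simp only [mem_image, mem_univ, true_and, forall_exists_index, forall_apply_eq_imp_iff]
    exact fun i => ⟨hQ.isMatchingFinset i, hQ.card_eq i⟩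
  · simp only [mem_image, mem_univ, true_and, forall_exists_index, forall_apply_eq_imp_iff]
    exact fun i j hij => hQ.pairwiseDisjoint fun h => hij (h ▸ rfl)

theorem Friendly.exists_isFriendlyPartition [Fintype V] (hG : Friendly G) (hne : G ≠ ⊥) :
    ∃ Q : Fin (chromaticIndex G) → Finset (Sym2 V), IsFriendlyPartition G Q := by
  obtain ⟨P, hPM, hPE, hPD⟩ := hG
  have hQ : IsFriendlyPartition G (Subtype.val : P → Finset (Sym2 V)) :=
    { isMatchingFinset := fun M => (hPM M M.2).1
      card_eq := fun M => (hPM M M.2).2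
      mem_edgeSet_iff := fun e => by simp [← mem_edgeFinset, hPE]
      pairwiseDisjoint := fun M N hMN => hPD M M.2 N N.2 (Subtype.coe_ne_coe.2 hMN) }
  exact ⟨_, hQ.comp_equiv (Fintype.equivFinOfCardEq (hQ.card_eq_chromaticIndex hne)).symm⟩

theorem isFriendlyPartition_bot :
    IsFriendlyPartition (⊥ : SimpleGraph V) fun _ : ι => (∅ : Finset (Sym2 V)) where
  isMatchingFinset _ := .empty _
  card_eq _ := matchingNumber_bot.symm
  mem_edgeSet_iff _ := by simp
  pairwiseDisjoint _ _ _ := disjoint_empty_left _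

end Partitions

section InducedSubgraphs

variable {G : SimpleGraph V} {s t : Set V}

theorem mem_edgeSet_induce_iff {f : Sym2 s} :
    f ∈ (G.induce s).edgeSet ↔ f.map Subtype.val ∈ G.edgeSet :=
  (Embedding.induce s).map_mem_edgeSet_iff.symm

def liftEdges (M : Finset (Sym2 s)) : Finset (Sym2 V) :=
  M.map (Function.Embedding.subtype (· ∈ s)).sym2Map

theorem mem_liftEdges {M : Finset (Sym2 s)} {e : Sym2 V} :
    e ∈ liftEdges M ↔ ∃ f ∈ M, f.map Subtype.val = e := by
  simp [liftEdges]

theorem mem_of_mem_liftEdges {M : Finset (Sym2 s)} {e : Sym2 V} {v : V}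
    (he : e ∈ liftEdges M) (hv : v ∈ e) : v ∈ s := by
  obtain ⟨f, -, rfl⟩ := mem_liftEdges.1 he
  obtain ⟨w, -, rfl⟩ := Sym2.mem_map.1 hv
  exact w.2

theorem disjoint_liftEdges (hst : Disjoint s t) (M : Finset (Sym2 s)) (N : Finset (Sym2 t)) :
    Disjoint (liftEdges M) (liftEdges N) :=
  disjoint_left.2 fun e heM heN =>
    hst.notMem_of_mem_left (mem_of_mem_liftEdges heM e.out_fst_mem)
      (mem_of_mem_liftEdges heN e.out_fst_mem)

theorem IsMatchingFinset.liftEdges {M : Finset (Sym2 s)} (hM : IsMatchingFinset (G.induce s) M) :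
    IsMatchingFinset G (liftEdges M) := by
  refine ⟨fun e he => ?_, fun e he f hf hef v ⟨hve, hvf⟩ => ?_⟩
  · obtain ⟨f, hf, rfl⟩ := mem_liftEdges.1 he
    exact mem_edgeSet_induce_iff.1 (hM.1 hf)
  · obtain ⟨e', he', rfl⟩ := mem_liftEdges.1 he
    obtain ⟨f', hf', rfl⟩ := mem_liftEdges.1 hf
    obtain ⟨w, hwe, rfl⟩ := Sym2.mem_map.1 hve
    obtain ⟨w', hwf, hww'⟩ := Sym2.mem_map.1 hvf
    have hw : w' = w := Subtype.ext hww'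
    exact hM.2 e' he' f' hf' (fun h => hef (h ▸ rfl)) w ⟨hwe, hw ▸ hwf⟩

noncomputable def restrictEdges (s : Set V) (M : Finset (Sym2 V)) : Finset (Sym2 s) :=
  M.preimage (Sym2.map Subtype.val) (Sym2.map.injective Subtype.val_injective).injOn

theorem IsMatchingFinset.restrictEdges {M : Finset (Sym2 V)} (hM : IsMatchingFinset G M) :
    IsMatchingFinset (G.induce s) (restrictEdges s M) := by
  refine ⟨fun e he => mem_edgeSet_induce_iff.2 (hM.1 (mem_preimage.1 he)), ?_⟩
  intro e he f hf hef v ⟨hve, hvf⟩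
  exact hM.2 _ (mem_preimage.1 he) _ (mem_preimage.1 hf)
    (fun h => hef (Sym2.map.injective Subtype.val_injective h)) v
    ⟨Sym2.mem_map.2 ⟨v, hve, rfl⟩, Sym2.mem_map.2 ⟨v, hvf, rfl⟩⟩

variable {κ : Type*} [Fintype κ] {S : κ → Set V}

theorem IsMatchingFinset.biUnion (hS : Pairwise (Disjoint on S)) {M : κ → Finset (Sym2 V)}
    (hM : ∀ k, IsMatchingFinset G (M k)) (hMS : ∀ k, ∀ e ∈ M k, ∀ v ∈ e, v ∈ S k) :
    IsMatchingFinset G (univ.biUnion M) := by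
  refine ⟨fun e he => ?_, fun e he f hf hef v ⟨hve, hvf⟩ => ?_⟩
  · obtain ⟨k, -, hk⟩ := mem_biUnion.1 he
    exact (hM k).1 hk
  · obtain ⟨k, -, hk⟩ := mem_biUnion.1 he
    obtain ⟨l, -, hl⟩ := mem_biUnion.1 hf
    obtain rfl : k = l := by
      by_contra hkl
      exact (hS hkl).notMem_of_mem_left (hMS k e hk v hve) (hMS l f hl v hvf)
    exact (hM k).2 e hk f hl hef v ⟨hve, hvf⟩

theorem isMatchingFinset_biUnion_liftEdges (hS : Pairwise (Disjoint on S))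
    {M : ∀ k, Finset (Sym2 (S k))} (hM : ∀ k, IsMatchingFinset (G.induce (S k)) (M k)) :
    IsMatchingFinset G (univ.biUnion fun k => liftEdges (M k)) :=
  .biUnion hS (fun k => (hM k).liftEdges) fun _ _ he _ hv => mem_of_mem_liftEdges he hv

theorem card_biUnion_liftEdges (hS : Pairwise (Disjoint on S)) (M : ∀ k, Finset (Sym2 (S k))) :
    #(univ.biUnion fun k => liftEdges (M k)) = ∑ k, #(M k) := by
  rw [card_biUnion fun k _ l _ hkl => disjoint_liftEdges (hS hkl) _ _]
  simp [liftEdges]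

end InducedSubgraphs

section ConnectedComponents

variable {G : SimpleGraph V}

theorem exists_connectedComponent_map_val_eq {e : Sym2 V} (he : e ∈ G.edgeSet) :
    ∃ (c : G.ConnectedComponent) (f : Sym2 c.supp), f.map Subtype.val = e := by
  induction e using Sym2.ind with
  | _ a b =>
    let c := G.connectedComponentMk a
    exact ⟨c, s(⟨a, rfl⟩, ⟨b, c.mem_supp_of_adj_mem_supp rfl he⟩), rfl⟩

variable [Fintype V]

theorem matchingNumber_eq_sum_connectedComponent :
    matchingNumber G = ∑ c : G.ConnectedComponent, matchingNumber (G.induce c.supp) := by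
  have hS := G.pairwise_disjoint_supp_connectedComponent
  apply le_antisymm
  · obtain ⟨M, hM, hcard⟩ := exists_isMatchingFinset_card_eq_matchingNumber G
    have hsub : M ⊆ univ.biUnion fun c : G.ConnectedComponent =>
        liftEdges (restrictEdges c.supp M) := by
      intro e he
      obtain ⟨c, f, rfl⟩ := exists_connectedComponent_map_val_eq (hM.1 he)
      exact mem_biUnion.2 ⟨c, mem_univ _, mem_liftEdges.2 ⟨f, mem_preimage.2 he, rfl⟩⟩
    calc matchingNumber G = #M := hcard.symm
      _ ≤ _ := card_le_card hsub
      _ = ∑ c : G.ConnectedComponent, #(restrictEdges c.supp M) := card_biUnion_liftEdges hS _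
      _ ≤ _ := sum_le_sum fun c _ => hM.restrictEdges.card_le_matchingNumber
  · choose M hM hcard using fun c : G.ConnectedComponent =>
      exists_isMatchingFinset_card_eq_matchingNumber (G.induce c.supp)
    calc ∑ c : G.ConnectedComponent, matchingNumber (G.induce c.supp) = ∑ c, #(M c) := by
          simp only [hcard]
      _ = _ := (card_biUnion_liftEdges hS M).symm
      _ ≤ matchingNumber G := (isMatchingFinset_biUnion_liftEdges hS hM).card_le_matchingNumber

theorem IsFriendlyPartition.biUnion_connectedComponent {ι : Type*}
    {Q : ∀ c : G.ConnectedComponent, ι → Finset (Sym2 c.supp)}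
    (hQ : ∀ c, IsFriendlyPartition (G.induce c.supp) (Q c)) :
    IsFriendlyPartition G fun i => univ.biUnion fun c => liftEdges (Q c i) := by
  have hS := G.pairwise_disjoint_supp_connectedComponent
  have hmatch i := isMatchingFinset_biUnion_liftEdges hS fun c => (hQ c).isMatchingFinset i
  refine ⟨hmatch, fun i => ?_, fun e => ⟨fun he => ?_, fun ⟨i, hi⟩ => (hmatch i).1 hi⟩,
    ?_⟩
  · rw [card_biUnion_liftEdges hS, matchingNumber_eq_sum_connectedComponent]
    exact sum_congr rfl fun c _ => (hQ c).card_eq i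
  · obtain ⟨c, f, rfl⟩ := exists_connectedComponent_map_val_eq he
    obtain ⟨i, hi⟩ := ((hQ c).mem_edgeSet_iff f).1 (mem_edgeSet_induce_iff.2 he)
    exact ⟨i, mem_biUnion.2 ⟨c, mem_univ _, mem_liftEdges.2 ⟨f, hi, rfl⟩⟩⟩
  · intro i j hij
    simp only [onFun, disjoint_biUnion_left, disjoint_biUnion_right, mem_univ,
      forall_const]
    intro c c'
    rcases eq_or_ne c c' with rfl | hcc'
    · exact disjoint_map _ |>.2 ((hQ c).pairwiseDisjoint hij)
    · exact disjoint_liftEdges (hS hcc'.symm) _ _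

end ConnectedComponents

end

theorem stmt_15 {V : Type*} [Fintype V] (G : SimpleGraph V)
    (h : ∀ c : G.ConnectedComponent, (G.induce c.supp).edgeFinset.Nonempty →
      Friendly (G.induce c.supp) ∧ chromaticIndex (G.induce c.supp) = chromaticIndex G) :
    Friendly G := by
  have hQ : ∀ c : G.ConnectedComponent, ∃ Q : Fin (chromaticIndex G) → Finset (Sym2 c.supp),
      IsFriendlyPartition (G.induce c.supp) Q := by
    intro c
    by_cases hc : G.induce c.supp = ⊥
    · exact ⟨_, hc ▸ isFriendlyPartition_bot⟩
    · obtain ⟨hfriendly, hχ⟩ := h c (SimpleGraph.edgeFinset_nonempty.2 hc)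
      exact hχ ▸ hfriendly.exists_isFriendlyPartition hc
  choose Q hQ using hQ
  exact (IsFriendlyPartition.biUnion_connectedComponent hQ).friendly
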